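/- arXiv:1206.3656 — 3 statements merged into one kernel-verified Lean document; each statement's English description precedes it below -/
import Mathlib

section
/- Let $H$ be a Hilbert space and let $f \in L^2(\mathbb{R}_+, dt/t; H)$. Define $Lf(t) := t\,\widehat f(t)$, where $\widehat f(t) = \int_0^\infty e^{-st} f(s)\,ds$ is the Laplace transform of $f$. Then $Lf$ belongs to $L^2(\mathbb{R}_+, dt/t; H)$ and $\|Lf\|_{L^2(\mathbb{R}_+, dt/t; H)} \le \|f\|_{L^2(\mathbb{R}_+, dt/t; H)}$. -/
/-!
Writing `Lf(t) = ∫ K(t,s) f(s) ds/s` with the kernel `K(t,s) = t s e^{-st}`, the kernel is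
symmetric and `∫ K(t,s) ds/s = ∫₀^∞ t e^{-st} ds = 1`. Schur's test (Cauchy–Schwarz against the
probability weight `K(t,·) ds/s`, then Tonelli) gives `‖Lf‖ ≤ ‖f‖` in `L²(dt/t)`.
-/

open MeasureTheory Set

/-- The measure `dt/t` on `(0,∞)`. -/
noncomputable def muLog : Measure ℝ :=
  (volume.restrict (Ioi (0:ℝ))).withDensity (fun t => ENNReal.ofReal t⁻¹)

open scoped ENNReal

section Schur

variable {α β : Type*} [MeasurableSpace α] [MeasurableSpace β] {μ : Measure α} {ν : Measure β}

theorem sq_lintegral_mul_le {w g : α → ℝ≥0∞} (hw : AEMeasurable w μ) (hg : AEMeasurable g μ) :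
    (∫⁻ a, w a * g a ∂μ) ^ 2 ≤ (∫⁻ a, w a ∂μ) * ∫⁻ a, w a * g a ^ 2 ∂μ := by
  -- Hölder for `√w` and `√w * g`
  have hr : AEMeasurable (fun a => w a ^ (1 / 2 : ℝ)) μ := hw.pow_const _
  have h := ENNReal.lintegral_mul_le_Lp_mul_Lq μ Real.HolderConjugate.two_two hr (hr.mul hg)
  have hsqrt_sq : ∀ x : ℝ≥0∞, (x ^ (1 / 2 : ℝ)) ^ (2 : ℝ) = x := fun x => by
    rw [← ENNReal.rpow_mul]; norm_num
  have hsqrt_mul : ∀ x : ℝ≥0∞, x ^ (1 / 2 : ℝ) * x ^ (1 / 2 : ℝ) = x := fun x => by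
    rw [← ENNReal.rpow_add_of_nonneg _ _ (by norm_num) (by norm_num)]; norm_num
  simp only [Pi.mul_apply, ← mul_assoc, hsqrt_mul, ENNReal.mul_rpow_of_nonneg _ _ zero_le_two,
    hsqrt_sq] at h
  calc (∫⁻ a, w a * g a ∂μ) ^ 2
      ≤ ((∫⁻ a, w a ∂μ) ^ (1 / 2 : ℝ) * (∫⁻ a, w a * g a ^ (2 : ℝ) ∂μ) ^ (1 / 2 : ℝ))
          ^ (2 : ℝ) := by
        rw [← ENNReal.rpow_two]; exact ENNReal.rpow_le_rpow h zero_le_two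
    _ = (∫⁻ a, w a ∂μ) * ∫⁻ a, w a * g a ^ 2 ∂μ := by
        simp only [ENNReal.mul_rpow_of_nonneg _ _ zero_le_two, hsqrt_sq, ENNReal.rpow_two]

variable [SFinite μ] [SFinite ν]

theorem lintegral_sq_lintegral_kernel_mul_le {K : α → β → ℝ≥0∞}
    (hK : Measurable (Function.uncurry K)) (hrow : ∀ᵐ t ∂μ, ∫⁻ s, K t s ∂ν ≤ 1)
    (hcol : ∀ᵐ s ∂ν, ∫⁻ t, K t s ∂μ ≤ 1) {N : β → ℝ≥0∞} (hN : AEMeasurable N ν) :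
    ∫⁻ t, (∫⁻ s, K t s * N s ∂ν) ^ 2 ∂μ ≤ ∫⁻ s, N s ^ 2 ∂ν := by
  have hpointwise : ∀ᵐ t ∂μ, (∫⁻ s, K t s * N s ∂ν) ^ 2 ≤ ∫⁻ s, K t s * N s ^ 2 ∂ν := by
    filter_upwards [hrow] with t ht
    calc (∫⁻ s, K t s * N s ∂ν) ^ 2
        ≤ (∫⁻ s, K t s ∂ν) * ∫⁻ s, K t s * N s ^ 2 ∂ν :=
          sq_lintegral_mul_le hK.of_uncurry_left.aemeasurable hN
      _ ≤ ∫⁻ s, K t s * N s ^ 2 ∂ν := mul_le_of_le_one_left' ht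
  have hprod : AEMeasurable (fun p : α × β => K p.1 p.2 * N p.2 ^ 2) (μ.prod ν) :=
    hK.aemeasurable.mul
      ((hN.pow_const 2).comp_quasiMeasurePreserving Measure.quasiMeasurePreserving_snd)
  calc ∫⁻ t, (∫⁻ s, K t s * N s ∂ν) ^ 2 ∂μ
      ≤ ∫⁻ t, ∫⁻ s, K t s * N s ^ 2 ∂ν ∂μ := lintegral_mono_ae hpointwise
    _ = ∫⁻ s, (∫⁻ t, K t s ∂μ) * N s ^ 2 ∂ν := by
        rw [lintegral_lintegral_swap hprod]
        exact lintegral_congr fun s => lintegral_mul_const'' _ hK.of_uncurry_right.aemeasurable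
    _ ≤ ∫⁻ s, N s ^ 2 ∂ν := lintegral_mono_ae (hcol.mono fun s hs => mul_le_of_le_one_left' hs)

theorem eLpNorm_two_le_of_enorm_le_lintegral_kernel {E F : Type*} [ENorm E] [TopologicalSpace F]
    [ContinuousENorm F] {K : α → β → ℝ≥0∞} (hK : Measurable (Function.uncurry K))
    (hrow : ∀ᵐ t ∂μ, ∫⁻ s, K t s ∂ν ≤ 1) (hcol : ∀ᵐ s ∂ν, ∫⁻ t, K t s ∂μ ≤ 1)
    {f : β → F} (hf : AEStronglyMeasurable f ν) {g : α → E}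
    (hg : ∀ᵐ t ∂μ, ‖g t‖ₑ ≤ ∫⁻ s, K t s * ‖f s‖ₑ ∂ν) :
    eLpNorm g 2 μ ≤ eLpNorm f 2 ν := by
  simp only [eLpNorm_eq_lintegral_rpow_enorm_toReal two_ne_zero ENNReal.ofNat_ne_top,
    ENNReal.toReal_ofNat, ENNReal.rpow_two]
  gcongr ?_ ^ _
  calc ∫⁻ t, ‖g t‖ₑ ^ 2 ∂μ
      ≤ ∫⁻ t, (∫⁻ s, K t s * ‖f s‖ₑ ∂ν) ^ 2 ∂μ := lintegral_mono_ae (hg.mono fun t ht => by gcongr)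
    _ ≤ ∫⁻ s, ‖f s‖ₑ ^ 2 ∂ν := lintegral_sq_lintegral_kernel_mul_le hK hrow hcol hf.enorm

end Schur

instance : SigmaFinite muLog := by
  unfold muLog; infer_instance

theorem lintegral_muLog (h : ℝ → ℝ≥0∞) :
    ∫⁻ s, h s ∂muLog = ∫⁻ s in Ioi 0, ENNReal.ofReal s⁻¹ * h s :=
  lintegral_withDensity_eq_lintegral_mul_non_measurable _ (by fun_prop)
    (.of_forall fun _ => ENNReal.ofReal_lt_top) h

theorem muLog_absolutelyContinuous : muLog ≪ volume.restrict (Ioi 0) :=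
  withDensity_absolutelyContinuous _ _

theorem absolutelyContinuous_muLog : volume.restrict (Ioi 0) ≪ muLog :=
  withDensity_absolutelyContinuous' (by fun_prop) <|
    (ae_restrict_mem measurableSet_Ioi).mono fun s (hs : 0 < s) => by positivity

theorem ae_muLog_pos : ∀ᵐ t ∂muLog, 0 < t :=
  muLog_absolutelyContinuous.ae_le (ae_restrict_mem measurableSet_Ioi)

theorem lintegral_Ioi_ofReal_mul_exp_neg_mul {t : ℝ} (ht : 0 < t) :
    ∫⁻ s in Ioi 0, ENNReal.ofReal (t * Real.exp (-(s * t))) = 1 := by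
  have hint : IntegrableOn (fun s => t * Real.exp (-(s * t))) (Ioi 0) := by
    have := (exp_neg_integrableOn_Ioi 0 ht).const_mul t
    simp_rw [neg_mul, mul_comm _ t] at this ⊢
    exact this
  have hval : ∫ s in Ioi 0, t * Real.exp (-(s * t)) = 1 := by
    rw [integral_const_mul]
    simp_rw [mul_comm _ t]
    rw [integral_comp_mul_left_Ioi (fun x => Real.exp (-x)) 0 ht, mul_zero,
      integral_exp_neg_Ioi_zero, smul_eq_mul, mul_one, mul_inv_cancel₀ ht.ne']
  rw [← ofReal_integral_eq_lintegral_ofReal hint (.of_forall fun s => by positivity), hval,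
    ENNReal.ofReal_one]

noncomputable def laplaceKernel (t s : ℝ) : ℝ≥0∞ :=
  ENNReal.ofReal (t * s * Real.exp (-(s * t)))

theorem laplaceKernel_comm (t s : ℝ) : laplaceKernel t s = laplaceKernel s t := by
  rw [laplaceKernel, laplaceKernel, mul_comm t s, mul_comm s t]

theorem measurable_laplaceKernel : Measurable (Function.uncurry laplaceKernel) := by
  unfold Function.uncurry laplaceKernel; fun_prop

theorem lintegral_laplaceKernel_mul (t : ℝ) (g : ℝ → ℝ≥0∞) :
    ∫⁻ s, laplaceKernel t s * g s ∂muLog =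
      ∫⁻ s in Ioi 0, ENNReal.ofReal (t * Real.exp (-(s * t))) * g s := by
  rw [lintegral_muLog]
  refine setLIntegral_congr_fun measurableSet_Ioi fun s (hs : 0 < s) => ?_
  rw [laplaceKernel, ← mul_assoc, ← ENNReal.ofReal_mul (by positivity)]
  congr 2
  field_simp

theorem lintegral_laplaceKernel {t : ℝ} (ht : 0 < t) : ∫⁻ s, laplaceKernel t s ∂muLog = 1 := by
  simpa only [Pi.one_apply, mul_one, lintegral_Ioi_ofReal_mul_exp_neg_mul ht] using
    lintegral_laplaceKernel_mul t 1

section Laplace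

variable {H : Type*} [NormedAddCommGroup H] [NormedSpace ℝ H]

theorem enorm_smul_laplace_le (f : ℝ → H) {t : ℝ} (ht : 0 < t) :
    ‖t • ∫ s in Ioi 0, Real.exp (-(s * t)) • f s‖ₑ ≤ ∫⁻ s, laplaceKernel t s * ‖f s‖ₑ ∂muLog := by
  rw [lintegral_laplaceKernel_mul, enorm_smul, Real.enorm_eq_ofReal ht.le]
  calc ENNReal.ofReal t * ‖∫ s in Ioi 0, Real.exp (-(s * t)) • f s‖ₑ
      ≤ ENNReal.ofReal t * ∫⁻ s in Ioi 0, ‖Real.exp (-(s * t)) • f s‖ₑ := by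
        gcongr; exact enorm_integral_le_lintegral_enorm _
    _ = ∫⁻ s in Ioi 0, ENNReal.ofReal (t * Real.exp (-(s * t))) * ‖f s‖ₑ := by
        rw [← lintegral_const_mul' _ _ ENNReal.ofReal_ne_top]
        congr 1 with s
        rw [enorm_smul, Real.enorm_eq_ofReal (Real.exp_pos _).le, ← mul_assoc,
          ← ENNReal.ofReal_mul ht.le]

theorem aestronglyMeasurable_laplace {f : ℝ → H}
    (hf : AEStronglyMeasurable f (volume.restrict (Ioi 0))) :
    AEStronglyMeasurable (fun t => ∫ s in Ioi 0, Real.exp (-(s * t)) • f s)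
      (volume.restrict (Ioi 0)) := by
  have hexp : Continuous fun p : ℝ × ℝ => Real.exp (-(p.2 * p.1)) := by fun_prop
  exact (hexp.aestronglyMeasurable.smul hf.comp_snd).integral_prod_right'

end Laplace

theorem stmt_0_general {H : Type*} [NormedAddCommGroup H] [InnerProductSpace ℝ H]
    (f : ℝ → H) (hf : MemLp f 2 muLog) :
    MemLp (fun t => t • ∫ s in Ioi (0:ℝ), Real.exp (-(s * t)) • f s) 2 muLog ∧
    eLpNorm (fun t => t • ∫ s in Ioi (0:ℝ), Real.exp (-(s * t)) • f s) 2 muLog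
      ≤ eLpNorm f 2 muLog := by
  have hrow : ∀ᵐ t ∂muLog, ∫⁻ s, laplaceKernel t s ∂muLog ≤ 1 :=
    ae_muLog_pos.mono fun t ht => (lintegral_laplaceKernel ht).le
  have hcol : ∀ᵐ s ∂muLog, ∫⁻ t, laplaceKernel t s ∂muLog ≤ 1 := by
    simpa only [laplaceKernel_comm] using hrow
  have hbound := eLpNorm_two_le_of_enorm_le_lintegral_kernel measurable_laplaceKernel hrow hcol
    hf.1 (ae_muLog_pos.mono fun t ht => enorm_smul_laplace_le f ht)
  have hmeas : AEStronglyMeasurable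
      (fun t => t • ∫ s in Ioi (0:ℝ), Real.exp (-(s * t)) • f s) muLog :=
    (aestronglyMeasurable_id.smul
      (aestronglyMeasurable_laplace (hf.1.mono_ac absolutelyContinuous_muLog))).mono_ac
      muLog_absolutelyContinuous
  exact ⟨⟨hmeas, hbound.trans_lt hf.2⟩, hbound⟩

/-- The Laplace-transform contraction on `L²((0,∞), dt/t; H)`:
if `f ∈ L²(dt/t; H)` then `Lf(t) = t ∫₀^∞ e^{-st} f(s) ds` belongs to `L²(dt/t; H)`
and `‖Lf‖ ≤ ‖f‖`. -/
theorem stmt_0 {H : Type*} [NormedAddCommGroup H] [InnerProductSpace ℝ H] [CompleteSpace H]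
    (f : ℝ → H) (hf : MemLp f 2 muLog) :
    MemLp (fun t => t • ∫ s in Ioi (0:ℝ), Real.exp (-(s * t)) • f s) 2 muLog ∧
    eLpNorm (fun t => t • ∫ s in Ioi (0:ℝ), Real.exp (-(s * t)) • f s) 2 muLog
      ≤ eLpNorm f 2 muLog :=
  stmt_0_general f hf
end

section
/- Let $g$ be a bounded analytic function on the strip $S_\theta = \{z \in \mathbb{C} : |\operatorname{Im} z| < \theta\}$ and suppose that for some $0 < \eta < \theta$ the restriction of $g$ to the two lines $\operatorname{Im} z = \pm\eta$ belongs to $L^2(\mathbb{R})$. Then $\sum_{n \in \mathbb{Z}} |g(n \ln 2)|^2 < \infty$. -/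
/-!
Fix a real point `a`. Cauchy's theorem on the rectangles `[-R, R] × [-η, η]`, applied to the
difference quotient at `a` of `G z = g z / (z - a - 2iη)`, yields as `R → ∞` a Cauchy formula on
the strip: `2πi G(a) = ∫ (G(t - iη) / (t - iη - a) - G(t + iη) / (t + iη - a)) dt`. The auxiliary
pole `a + 2iη`, outside the closed strip, makes the kernel decay like `1 / ((t - a)² + η²)`, so
`|g a| ≤ ∫ h P_a`, where `h t = |g(t + iη)| + |g(t - iη)|` is in `L²` and `P_a` is the Cauchy
probability density with location `a` and scale `η`. Cauchy–Schwarz against `P_a` gives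
`|g a|² ≤ ∫ h² P_a`, and as `∑ₙ P_{n ln 2}` is bounded uniformly on `ℝ`, summing over `n` gives
`∑ₙ |g(n ln 2)|² ≤ C ‖h‖₂²`.
-/

open MeasureTheory Complex

open Set Filter Topology Bornology ProbabilityTheory
open scoped Interval NNReal Real

theorem sq_integral_mul_le_integral_sq_mul {α : Type*} [MeasurableSpace α] {μ : Measure α}
    {f p : α → ℝ} (hp : 0 ≤ p) (hp_int : Integrable p μ) (hp_one : ∫ x, p x ∂μ = 1)
    (hfp : Integrable (fun x => f x * p x) μ) (hf2p : Integrable (fun x => f x ^ 2 * p x) μ) :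
    (∫ x, f x * p x ∂μ) ^ 2 ≤ ∫ x, f x ^ 2 * p x ∂μ := by
  set c := ∫ x, f x * p x ∂μ
  have hexpand : ∫ x, (f x - c) ^ 2 * p x ∂μ = (∫ x, f x ^ 2 * p x ∂μ) - c ^ 2 := by
    have hpt : ∀ x, (f x - c) ^ 2 * p x = f x ^ 2 * p x - 2 * c * (f x * p x) + c ^ 2 * p x :=
      fun x => by ring
    have hlin : Integrable (fun x => f x ^ 2 * p x - 2 * c * (f x * p x)) μ :=
      hf2p.sub (hfp.const_mul _)
    simp_rw [hpt]
    rw [integral_add hlin (hp_int.const_mul _), integral_sub hf2p (hfp.const_mul _),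
      integral_const_mul, integral_const_mul, hp_one]
    ring
  have hnonneg : 0 ≤ ∫ x, (f x - c) ^ 2 * p x ∂μ :=
    integral_nonneg fun x => mul_nonneg (sq_nonneg _) (hp x)
  linarith

theorem summable_integral_mul_of_sum_le {ι α : Type*} [MeasurableSpace α] {μ : Measure α}
    {φ : α → ℝ} {p : ι → α → ℝ} {B : ℝ} (hφ : Integrable φ μ) (hφ0 : 0 ≤ φ) (hp0 : ∀ i, 0 ≤ p i)
    (hpm : ∀ i, AEStronglyMeasurable (p i) μ) (hB : ∀ (F : Finset ι) x, ∑ i ∈ F, p i x ≤ B) :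
    Summable fun i => ∫ x, φ x * p i x ∂μ := by
  have hint : ∀ i, Integrable (fun x => φ x * p i x) μ := fun i =>
    hφ.mul_bdd (hpm i) <| ae_of_all _ fun x => by
      simpa [Real.norm_of_nonneg (hp0 i x)] using hB {i} x
  refine summable_of_sum_le (c := ∫ x, φ x * B ∂μ)
    (fun i => integral_nonneg fun x => mul_nonneg (hφ0 x) (hp0 i x)) fun F => ?_
  rw [← integral_finsetSum F fun i _ => hint i]
  refine integral_mono (integrable_finsetSum F fun i _ => hint i) (hφ.mul_const B) fun x => ?_
  simp only [← Finset.mul_sum]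
  exact mul_le_mul_of_nonneg_left (hB F x) (hφ0 x)

theorem sq_mul_le_four_mul_sq_sub {s l : ℝ} (hs : |s| ≤ l / 2) (j : ℤ) :
    (j * l) ^ 2 ≤ 4 * (s - j * l) ^ 2 := by
  rcases eq_or_ne j 0 with rfl | hj
  · simp [sq_nonneg]
  have hl : 0 ≤ l := by linarith [abs_nonneg s]
  have hj1 : l ≤ |j * l| := by
    rw [abs_mul, abs_of_nonneg hl]
    exact le_mul_of_one_le_left hl (by exact_mod_cast Int.one_le_abs hj)
  have hfar : |j * l| / 2 ≤ |s - j * l| := by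
    have := abs_sub_abs_le_abs_sub (j * l) s
    rw [abs_sub_comm] at this
    linarith
  nlinarith [sq_abs (j * l : ℝ), sq_abs (s - j * l), abs_nonneg (j * l : ℝ)]

theorem one_add_sq_le_mul_sq_add_sq {s l γ : ℝ} (hl : 0 < l) (hγ : γ ≠ 0) (hs : |s| ≤ l / 2)
    (j : ℤ) : 1 + (j : ℝ) ^ 2 ≤ (4 / l ^ 2 + 1 / γ ^ 2) * ((s - j * l) ^ 2 + γ ^ 2) := by
  have hj : (j : ℝ) ^ 2 ≤ 4 / l ^ 2 * (s - j * l) ^ 2 := by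
    rw [div_mul_eq_mul_div, le_div_iff₀ (by positivity), ← mul_pow]
    exact sq_mul_le_four_mul_sq_sub hs j
  have hexpand : (4 / l ^ 2 + 1 / γ ^ 2) * ((s - j * l) ^ 2 + γ ^ 2) =
      1 / γ ^ 2 * γ ^ 2 + 4 / l ^ 2 * (s - j * l) ^ 2 +
        ((s - j * l) ^ 2 / γ ^ 2 + 4 * γ ^ 2 / l ^ 2) := by
    ring
  rw [hexpand, one_div_mul_cancel (by positivity)]
  have : 0 ≤ (s - j * l) ^ 2 / γ ^ 2 + 4 * γ ^ 2 / l ^ 2 := by positivity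
  linarith

theorem summable_inv_one_add_sq_int : Summable fun j : ℤ => (1 + (j : ℝ) ^ 2)⁻¹ := by
  refine Summable.of_norm_bounded_eventually (Real.summable_one_div_int_pow.2 one_lt_two) ?_
  filter_upwards [eventually_cofinite_ne 0] with j hj
  rw [Real.norm_of_nonneg (by positivity), one_div]
  exact inv_anti₀ (by positivity) (by linarith)

theorem exists_sum_cauchyPDFReal_le {l : ℝ} (hl : 0 < l) (γ : ℝ≥0) (hγ : γ ≠ 0) :
    ∃ B, ∀ (F : Finset ℤ) (t : ℝ), ∑ n ∈ F, cauchyPDFReal (n * l) γ t ≤ B := by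
  set K := 4 / l ^ 2 + 1 / (γ : ℝ) ^ 2
  refine ⟨π⁻¹ * γ * K * ∑' j : ℤ, (1 + (j : ℝ) ^ 2)⁻¹, fun F t => ?_⟩
  set m := round (t / l)
  have hm : |t - m * l| ≤ l / 2 := by
    have h := abs_sub_round (t / l)
    rw [show t - m * l = (t / l - m) * l by field_simp, abs_mul, abs_of_pos hl]
    nlinarith
  have hterm (n : ℤ) :
      cauchyPDFReal (n * l) γ t ≤ π⁻¹ * γ * K * (1 + ((n - m : ℤ) : ℝ) ^ 2)⁻¹ := by
    have hbound := one_add_sq_le_mul_sq_add_sq (γ := γ) hl (by exact_mod_cast hγ) hm (n - m)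
    rw [show t - m * l - ((n - m : ℤ) : ℝ) * l = t - n * l by push_cast; ring] at hbound
    rw [cauchyPDFReal_def, mul_assoc (π⁻¹ * γ)]
    gcongr
    rw [← div_eq_mul_inv, le_div_iff₀ (by positivity), inv_mul_le_iff₀ (by positivity), mul_comm]
    exact hbound
  calc ∑ n ∈ F, cauchyPDFReal (n * l) γ t
      ≤ π⁻¹ * γ * K * ∑ n ∈ F, (1 + ((n - m : ℤ) : ℝ) ^ 2)⁻¹ := by
        rw [Finset.mul_sum]
        exact Finset.sum_le_sum fun n _ => hterm n
    _ ≤ π⁻¹ * γ * K * ∑' j : ℤ, (1 + (j : ℝ) ^ 2)⁻¹ := by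
        gcongr
        rw [← (Equiv.subRight m).tsum_eq]
        exact (summable_inv_one_add_sq_int.comp_injective (Equiv.subRight m).injective).sum_le_tsum
          F fun _ _ => by positivity

namespace Complex

theorem continuous_comp_add_mul_I {X : Type*} [TopologicalSpace X] {f : ℂ → X} {s : Set ℝ}
    (hf : ContinuousOn f (im ⁻¹' s)) {y : ℝ} (hy : y ∈ s) : Continuous fun x : ℝ => f (x + y * I) :=
  hf.comp_continuous (by fun_prop) fun x => by simpa using hy

variable {E : Type*} [NormedAddCommGroup E] [NormedSpace ℂ E]

theorem tendsto_dslope_of_isBoundedUnder {l : Filter ℂ} (hl : l ≤ cobounded ℂ) {G : ℂ → E}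
    (hG : IsBoundedUnder (· ≤ ·) l (‖G ·‖)) (a : ℂ) : Tendsto (dslope G a) l (𝓝 0) := by
  obtain ⟨C, hC⟩ := hG
  have hinv : Tendsto (fun z => (z - a)⁻¹) l (𝓝 0) :=
    tendsto_inv₀_cobounded.comp ((tendsto_sub_const_cobounded a).mono_left hl)
  have hslope : Tendsto (fun z => (z - a)⁻¹ • (G z - G a)) l (𝓝 0) :=
    hinv.zero_smul_isBoundedUnder_le
      ⟨C + ‖G a‖, eventually_map.2 <| (eventually_map.1 hC).mono fun z hz =>
        (norm_sub_le _ _).trans (add_le_add_left hz _)⟩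
  refine hslope.congr' ?_
  filter_upwards [hl (eventually_cobounded_le_norm (‖a‖ + 1))] with z hz
  have hza : z ≠ a := by rintro rfl; linarith
  rw [dslope_of_ne _ hza, slope_def_module]

theorem tendsto_integral_vertical_cobounded {f : ℂ → E} {y₁ y₂ : ℝ}
    (hf : Tendsto f (cobounded ℂ ⊓ 𝓟 (im ⁻¹' [[y₁, y₂]])) (𝓝 0)) :
    Tendsto (fun x : ℝ => ∫ y in y₁..y₂, f (x + y * I)) (cobounded ℝ) (𝓝 0) := by
  rw [Metric.tendsto_nhds]
  intro ε hε
  obtain ⟨r, -, hr⟩ := hasBasis_cobounded_norm.eventually_iff.1 <| eventually_inf_principal.1 <|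
    hf.eventually (Metric.closedBall_mem_nhds 0 (by positivity : 0 < ε / (|y₂ - y₁| + 1)))
  filter_upwards [eventually_cobounded_le_norm r] with x hx
  have hbound : ∀ y ∈ Ι y₁ y₂, ‖f (x + y * I)‖ ≤ ε / (|y₂ - y₁| + 1) := fun y hy => by
    have hnorm : r ≤ ‖(x + y * I : ℂ)‖ :=
      hx.trans (by simpa using abs_re_le_norm (x + y * I : ℂ))
    simpa using hr hnorm (by simpa using uIoc_subset_uIcc hy)
  calc dist (∫ y in y₁..y₂, f (x + y * I)) 0
      ≤ ε / (|y₂ - y₁| + 1) * |y₂ - y₁| := by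
        simpa using intervalIntegral.norm_integral_le_of_norm_le_const hbound
    _ < ε := by
        rw [div_mul_eq_mul_div, div_lt_iff₀ (by positivity)]
        nlinarith [abs_nonneg (y₂ - y₁)]

theorem integral_sub_horizontal_eq_zero {f : ℂ → E} {y₁ y₂ : ℝ}
    (hf : DifferentiableOn ℂ f (im ⁻¹' [[y₁, y₂]]))
    (hdecay : Tendsto f (cobounded ℂ ⊓ 𝓟 (im ⁻¹' [[y₁, y₂]])) (𝓝 0))
    (hint : Integrable fun x : ℝ => f (x + y₁ * I) - f (x + y₂ * I)) :
    ∫ x : ℝ, (f (x + y₁ * I) - f (x + y₂ * I)) = 0 := by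
  have hline : ∀ y ∈ [[y₁, y₂]], ∀ R : ℝ,
      IntervalIntegrable (fun x : ℝ => f (x + y * I)) volume (-R) R := fun y hy R =>
    (continuous_comp_add_mul_I hf.continuousOn hy).intervalIntegrable _ _
  have hrect : ∀ R : ℝ, (∫ x in (-R)..R, (f (x + y₁ * I) - f (x + y₂ * I))) =
      I • (∫ y in y₁..y₂, f (↑(-R) + y * I)) - I • ∫ y in y₁..y₂, f (R + y * I) := fun R => by
    have := integral_boundary_rect_eq_zero_of_differentiableOn f ⟨-R, y₁⟩ ⟨R, y₂⟩
      (hf.mono fun z hz => hz.2)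
    rw [intervalIntegral.integral_sub (hline _ left_mem_uIcc R) (hline _ right_mem_uIcc R)]
    linear_combination (norm := module) this
  have hvert := tendsto_integral_vertical_cobounded hdecay
  have hsides := (hvert.comp (tendsto_neg_atTop_atBot.mono_right
    IsOrderBornology.atBot_le_cobounded)).const_smul I |>.sub
    ((hvert.comp IsOrderBornology.atTop_le_cobounded).const_smul I)
  refine tendsto_nhds_unique
    (intervalIntegral_tendsto_integral hint tendsto_neg_atTop_atBot tendsto_id) ?_
  simpa [hrect, Function.comp_def] using hsides

theorem sq_add_sq_le_norm_sub_mul_norm_sub {γ : ℝ} {w : ℂ} (hw : |w.im| = γ) (a : ℝ) :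
    (w.re - a) ^ 2 + γ ^ 2 ≤ ‖w - a‖ * ‖w - (a + 2 * γ * I)‖ := by
  have hnear : ‖w - a‖ ^ 2 = (w.re - a) ^ 2 + γ ^ 2 := by
    rw [Complex.sq_norm, normSq_apply, ← hw, sq_abs]
    simp [sq]
  have hfar : (w.re - a) ^ 2 + γ ^ 2 ≤ ‖w - (a + 2 * γ * I)‖ ^ 2 := by
    rw [Complex.sq_norm, normSq_apply]
    simp only [sub_re, add_re, ofReal_re, mul_re, re_ofNat, im_ofNat, ofReal_im, mul_zero, sub_zero,
      I_re, mul_im, zero_mul, add_zero, I_im, mul_one, sub_self, sub_im, add_im, zero_add]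
    nlinarith [le_abs_self w.im, sq_abs w.im, abs_nonneg w.im]
  have hle : ‖w - a‖ ≤ ‖w - (a + 2 * γ * I)‖ :=
    (pow_le_pow_iff_left₀ (norm_nonneg _) (norm_nonneg _) two_ne_zero).1 (hnear ▸ hfar)
  nlinarith [norm_nonneg (w - a)]

theorem inv_sub_inv_eq_two_pi_I_mul_cauchyPDFReal {γ : ℝ≥0} (hγ : γ ≠ 0) (a x : ℝ) :
    ((x : ℂ) - (γ : ℝ) * I - a)⁻¹ - ((x : ℂ) + (γ : ℝ) * I - a)⁻¹ =
      2 * π * I * cauchyPDFReal a γ x := by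
  have hprod : ((x : ℂ) - (γ : ℝ) * I - a) * ((x : ℂ) + (γ : ℝ) * I - a) =
      (((x - a) ^ 2 + (γ : ℝ) ^ 2 : ℝ) : ℂ) := by
    push_cast
    linear_combination (-((γ : ℝ) : ℂ) ^ 2) * I_sq
  have hpos : ((x - a) ^ 2 + (γ : ℝ) ^ 2 : ℝ) ≠ 0 := by positivity
  have hlow : (x : ℂ) - (γ : ℝ) * I - a ≠ 0 := left_ne_zero_of_mul (hprod ▸ ofReal_ne_zero.2 hpos)
  have hup : (x : ℂ) + (γ : ℝ) * I - a ≠ 0 := right_ne_zero_of_mul (hprod ▸ ofReal_ne_zero.2 hpos)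
  rw [inv_sub_inv hlow hup, hprod, cauchyPDFReal_def]
  push_cast
  field_simp
  ring

theorem integral_sub_horizontal_div_sub_eq_two_pi_I_mul {G : ℂ → ℂ} {γ : ℝ≥0} (hγ : γ ≠ 0) {C : ℝ}
    (hG : DifferentiableOn ℂ G {z | |z.im| ≤ γ}) (hC : ∀ z : ℂ, |z.im| ≤ γ → ‖G z‖ ≤ C) {a : ℝ}
    (hint_low : Integrable fun x : ℝ => G (x - (γ : ℝ) * I) / (x - (γ : ℝ) * I - a))
    (hint_up : Integrable fun x : ℝ => G (x + (γ : ℝ) * I) / (x + (γ : ℝ) * I - a)) :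
    ∫ x : ℝ, (G (x - (γ : ℝ) * I) / (x - (γ : ℝ) * I - a) -
      G (x + (γ : ℝ) * I) / (x + (γ : ℝ) * I - a)) = 2 * π * I * G a := by
  have hstrip : {z : ℂ | |z.im| ≤ γ} = im ⁻¹' [[-(γ : ℝ), γ]] := by
    ext z
    simp [abs_le]
  have hopen : IsOpen {z : ℂ | |z.im| < γ} := isOpen_lt (by fun_prop) continuous_const
  have hnhds : {z : ℂ | |z.im| ≤ γ} ∈ 𝓝 (a : ℂ) :=
    mem_of_superset (hopen.mem_nhds (by simpa using pos_iff_ne_zero.2 hγ))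
      (ofPred_subset_ofPred.2 fun _ => le_of_lt)
  have hF := (differentiableOn_dslope hnhds).2 hG
  have hdecay := tendsto_dslope_of_isBoundedUnder (l := cobounded ℂ ⊓ 𝓟 {z | |z.im| ≤ γ})
    inf_le_left ⟨C, eventually_map.2 <| eventually_inf_principal.2 <| .of_forall hC⟩ (a : ℂ)
  rw [hstrip] at hF hdecay
  have hne : ∀ (x : ℝ) {y : ℝ}, y ≠ 0 → (x : ℂ) + y * I ≠ a := fun x y hy h =>
    hy (by simpa using congr_arg im h)
  -- The constant part `G a / (z - a)` of the difference quotient is not integrable on either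
  -- line, but its jump across the strip is `2πi G a` times the Cauchy density.
  have hjump : ∀ x : ℝ, dslope G a (x + ↑(-(γ : ℝ)) * I) - dslope G a (x + (γ : ℝ) * I) =
      (G (x - (γ : ℝ) * I) / (x - (γ : ℝ) * I - a) - G (x + (γ : ℝ) * I) / (x + (γ : ℝ) * I - a)) -
        2 * π * I * G a * cauchyPDFReal a γ x := fun x => by
    have hγ' : (γ : ℝ) ≠ 0 := by exact_mod_cast hγ
    rw [dslope_of_ne _ (hne x (neg_ne_zero.2 hγ')), dslope_of_ne _ (hne x hγ'), slope_def_module,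
      slope_def_module, smul_eq_mul, smul_eq_mul, ofReal_neg, neg_mul, ← sub_eq_add_neg]
    linear_combination (-G a) * inv_sub_inv_eq_two_pi_I_mul_cauchyPDFReal hγ a x
  have hD : Integrable fun x : ℝ => G (x - (γ : ℝ) * I) / (x - (γ : ℝ) * I - a) -
      G (x + (γ : ℝ) * I) / (x + (γ : ℝ) * I - a) := hint_low.sub hint_up
  have hP : Integrable fun x : ℝ => 2 * π * I * G a * cauchyPDFReal a γ x :=
    (integrable_cauchyPDFReal a).ofReal.const_mul _
  have key := integral_sub_horizontal_eq_zero hF hdecay (by simp_rw [hjump]; exact hD.sub hP)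
  simp_rw [hjump] at key
  rw [integral_sub hD hP, integral_const_mul, integral_complex_ofReal,
    integral_cauchyPDFReal_eq_one a hγ] at key
  simpa [sub_eq_zero] using key

theorem continuous_strip_boundary {X : Type*} [TopologicalSpace X] {g : ℂ → X} {γ : ℝ≥0}
    (hg : ContinuousOn g {z | |z.im| ≤ γ}) :
    (Continuous fun x : ℝ => g (x + (γ : ℝ) * I)) ∧
      Continuous fun x : ℝ => g (x - (γ : ℝ) * I) := by
  refine ⟨continuous_comp_add_mul_I (s := {y | |y| ≤ γ}) hg (by simp), ?_⟩
  simpa [sub_eq_add_neg] using continuous_comp_add_mul_I (s := {y | |y| ≤ γ}) hg (y := -γ) (by simp)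

theorem integrable_boundary_pow_mul_cauchyPDFReal {g : ℂ → ℂ} {γ : ℝ≥0} {M : ℝ}
    (hg : ContinuousOn g {z | |z.im| ≤ γ}) (hM : ∀ z : ℂ, |z.im| ≤ γ → ‖g z‖ ≤ M) (a : ℝ)
    (k : ℕ) : Integrable fun x : ℝ =>
      (‖g (x + (γ : ℝ) * I)‖ + ‖g (x - (γ : ℝ) * I)‖) ^ k * cauchyPDFReal a γ x := by
  obtain ⟨hup, hlow⟩ := continuous_strip_boundary hg
  refine (integrable_cauchyPDFReal a).bdd_mul (c := (M + M) ^ k)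
    ((hup.norm.add hlow.norm).pow k).aestronglyMeasurable (ae_of_all _ fun x => ?_)
  have hsum : 0 ≤ ‖g (x + (γ : ℝ) * I)‖ + ‖g (x - (γ : ℝ) * I)‖ := by positivity
  rw [norm_pow, Real.norm_of_nonneg hsum]
  exact pow_le_pow_left₀ hsum (add_le_add (hM _ (by simp)) (hM _ (by simp))) k

theorem le_norm_sub_of_abs_im_le {γ : ℝ} {z : ℂ} (hz : |z.im| ≤ γ) (a : ℝ) :
    γ ≤ ‖z - (a + 2 * γ * I)‖ := by
  refine le_trans ?_ (abs_im_le_norm _)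
  simp only [sub_im, add_im, ofReal_im, mul_im, mul_re, re_ofNat, ofReal_re, im_ofNat, mul_zero,
    sub_zero, I_im, mul_one, zero_mul, add_zero, I_re, zero_add]
  exact le_abs.2 (Or.inr (by linarith [le_abs_self z.im]))

theorem norm_div_sub_div_sub_le {g : ℂ → ℂ} {γ : ℝ≥0} (hγ : γ ≠ 0) (a x : ℝ) {y : ℝ}
    (hy : |y| = γ) :
    ‖g (x + y * I) / (x + y * I - (a + 2 * (γ : ℝ) * I)) / (x + y * I - a)‖ ≤
      π / γ * (‖g (x + y * I)‖ * cauchyPDFReal a γ x) := by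
  have hprod := sq_add_sq_le_norm_sub_mul_norm_sub (w := x + y * I) (by simpa using hy) a
  rw [show ((x : ℂ) + y * I).re = x by simp] at hprod
  calc ‖g (x + y * I) / (x + y * I - (a + 2 * (γ : ℝ) * I)) / (x + y * I - a)‖
      = ‖g (x + y * I)‖ / (‖x + y * I - a‖ * ‖x + y * I - (a + 2 * (γ : ℝ) * I)‖) := by
        rw [div_div, norm_div, norm_mul, mul_comm ‖(_ : ℂ) - (_ + _)‖]
    _ ≤ ‖g (x + y * I)‖ / ((x - a) ^ 2 + (γ : ℝ) ^ 2) :=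
        div_le_div_of_nonneg_left (norm_nonneg _) (by positivity) hprod
    _ = π / γ * (‖g (x + y * I)‖ * cauchyPDFReal a γ x) := by
        rw [cauchyPDFReal_def]
        field_simp

theorem integrable_div_sub_div_sub {g : ℂ → ℂ} {γ : ℝ≥0} (hγ : γ ≠ 0) {M : ℝ}
    (hg : ContinuousOn g {z | |z.im| ≤ γ}) (hM : ∀ z : ℂ, |z.im| ≤ γ → ‖g z‖ ≤ M) (a : ℝ)
    {y : ℝ} (hy : |y| = γ) :
    Integrable fun x : ℝ =>
      g (x + y * I) / (x + y * I - (a + 2 * (γ : ℝ) * I)) / (x + y * I - a) := by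
  have hγ₀ : (0 : ℝ) < γ := by positivity
  have hcont : Continuous fun x : ℝ =>
      g (x + y * I) / (x + y * I - (a + 2 * (γ : ℝ) * I)) / (x + y * I - a) := by
    refine ((continuous_comp_add_mul_I (s := {y | |y| ≤ γ}) hg hy.le).div (by fun_prop)
      fun x => ?_).div (by fun_prop) fun x h => hγ₀.ne' (by simpa [← hy] using congr_arg im h)
    exact norm_pos_iff.1 (hγ₀.trans_le (le_norm_sub_of_abs_im_le (by simp [hy]) a))
  refine (((integrable_cauchyPDFReal a (γ := γ)).const_mul M).const_mul (π / γ)).mono'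
    hcont.aestronglyMeasurable (ae_of_all _ fun x => (norm_div_sub_div_sub_le hγ a x hy).trans ?_)
  gcongr
  · exact (cauchyPDF_pos a hγ x).le
  · exact hM _ (by simp [hy])

theorem norm_le_integral_mul_cauchyPDFReal {g : ℂ → ℂ} {γ : ℝ≥0} (hγ : γ ≠ 0) {M : ℝ}
    (hg : DifferentiableOn ℂ g {z | |z.im| ≤ γ}) (hM : ∀ z : ℂ, |z.im| ≤ γ → ‖g z‖ ≤ M) (a : ℝ) :
    ‖g a‖ ≤ ∫ x : ℝ, (‖g (x + (γ : ℝ) * I)‖ + ‖g (x - (γ : ℝ) * I)‖) * cauchyPDFReal a γ x := by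
  have hγ₀ : (0 : ℝ) < γ := by positivity
  set b : ℂ := a + 2 * (γ : ℝ) * I
  set G : ℂ → ℂ := fun z => g z / (z - b)
  have hG : DifferentiableOn ℂ G {z | |z.im| ≤ γ} :=
    hg.div (by fun_prop) fun z hz => norm_pos_iff.1 (hγ₀.trans_le (le_norm_sub_of_abs_im_le hz a))
  have hGM : ∀ z : ℂ, |z.im| ≤ γ → ‖G z‖ ≤ M / γ := fun z hz =>
    (norm_div _ _).trans_le <| (div_le_div_of_nonneg_left (norm_nonneg _) hγ₀
      (le_norm_sub_of_abs_im_le hz a)).trans (div_le_div_of_nonneg_right (hM z hz) hγ₀.le)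
  have hlow : ∀ x : ℝ, (x : ℂ) + ↑(-(γ : ℝ)) * I = x - (γ : ℝ) * I := fun x => by push_cast; ring
  have hup : |(γ : ℝ)| = γ := abs_of_nonneg γ.2
  have hcauchy := integral_sub_horizontal_div_sub_eq_two_pi_I_mul hγ hG hGM
    (by simpa only [hlow] using
      integrable_div_sub_div_sub hγ hg.continuousOn hM a (y := -γ) (by simp))
    (integrable_div_sub_div_sub hγ hg.continuousOn hM a hup)
  have hmaj : Integrable fun x : ℝ =>
      (‖g (x + (γ : ℝ) * I)‖ + ‖g (x - (γ : ℝ) * I)‖) * cauchyPDFReal a γ x := by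
    simpa using integrable_boundary_pow_mul_cauchyPDFReal hg.continuousOn hM a 1
  have hbound : 2 * π * ‖G a‖ ≤ π / γ *
      ∫ x : ℝ, (‖g (x + (γ : ℝ) * I)‖ + ‖g (x - (γ : ℝ) * I)‖) * cauchyPDFReal a γ x := by
    rw [← integral_const_mul,
      show 2 * π * ‖G a‖ = ‖2 * π * I * G a‖ by simp [abs_of_pos Real.pi_pos], ← hcauchy]
    refine norm_integral_le_of_norm_le (hmaj.const_mul _)
      (ae_of_all _ fun x => (norm_sub_le _ _).trans ?_)
    have hl := norm_div_sub_div_sub_le (g := g) hγ a x (y := -γ) (by simp)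
    rw [hlow] at hl
    linarith [norm_div_sub_div_sub_le (g := g) hγ a x hup]
  have hGa : ‖g a‖ = 2 * γ * ‖G a‖ := by
    have hab : (a : ℂ) - b = -(2 * (γ : ℝ) * I) := by simp [b]
    have hab0 : (a : ℂ) - b ≠ 0 := by rw [hab]; simp [hγ₀.ne']
    rw [show g a = G a * (a - b) from (div_mul_cancel₀ _ hab0).symm, norm_mul, hab]
    simp only [norm_neg, Complex.norm_mul, norm_ofNat, norm_real, Real.norm_eq_abs,
      abs_of_pos hγ₀, norm_I, mul_one]
    ring
  calc ‖g a‖ = γ / π * (2 * π * ‖G a‖) := by rw [hGa]; field_simp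
    _ ≤ γ / π * (π / γ * ∫ x : ℝ,
          (‖g (x + (γ : ℝ) * I)‖ + ‖g (x - (γ : ℝ) * I)‖) * cauchyPDFReal a γ x) := by gcongr
    _ = _ := by field_simp

theorem sq_norm_le_integral_sq_mul_cauchyPDFReal {g : ℂ → ℂ} {γ : ℝ≥0} (hγ : γ ≠ 0) {M : ℝ}
    (hg : DifferentiableOn ℂ g {z | |z.im| ≤ γ}) (hM : ∀ z : ℂ, |z.im| ≤ γ → ‖g z‖ ≤ M) (a : ℝ) :
    ‖g a‖ ^ 2 ≤
      ∫ x : ℝ, (‖g (x + (γ : ℝ) * I)‖ + ‖g (x - (γ : ℝ) * I)‖) ^ 2 * cauchyPDFReal a γ x := by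
  have hint := integrable_boundary_pow_mul_cauchyPDFReal hg.continuousOn hM a
  calc ‖g a‖ ^ 2
      ≤ (∫ x : ℝ, (‖g (x + (γ : ℝ) * I)‖ + ‖g (x - (γ : ℝ) * I)‖) * cauchyPDFReal a γ x) ^ 2 :=
        pow_le_pow_left₀ (norm_nonneg _) (norm_le_integral_mul_cauchyPDFReal hγ hg hM a) 2
    _ ≤ _ := sq_integral_mul_le_integral_sq_mul (fun x => (cauchyPDF_pos a hγ x).le)
        (integrable_cauchyPDFReal a) (integral_cauchyPDFReal_eq_one a hγ)
        (by simpa using hint 1) (hint 2)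

end Complex

/-- If `g` is bounded and analytic on the strip `S_θ = {|Im z| < θ}` and its restrictions
to the lines `Im z = ±η` (for some `0 < η < θ`) are square integrable, then the samples
`g(n ln 2)`, `n ∈ ℤ`, are square summable. -/
theorem stmt_4 (θ η : ℝ) (hη : 0 < η) (hηθ : η < θ)
    (g : ℂ → ℂ)
    (hg : DifferentiableOn ℂ g {z : ℂ | |z.im| < θ})
    (hbdd : ∃ M, ∀ z : ℂ, |z.im| < θ → ‖g z‖ ≤ M)
    (hplus : Integrable (fun x : ℝ => ‖g (x + η * I)‖ ^ 2))
    (hminus : Integrable (fun x : ℝ => ‖g (x - η * I)‖ ^ 2)) :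
    Summable (fun n : ℤ => ‖g ((n : ℝ) * Real.log 2)‖ ^ 2) := by
  lift η to ℝ≥0 using hη.le
  have hη0 : η ≠ 0 := by rintro rfl; simp at hη
  obtain ⟨M, hM⟩ := hbdd
  have hstrip : ∀ z : ℂ, |z.im| ≤ η → |z.im| < θ := fun z hz => hz.trans_lt hηθ
  have hg' : DifferentiableOn ℂ g {z | |z.im| ≤ η} := hg.mono fun z => hstrip z
  obtain ⟨hup, hlow⟩ := Complex.continuous_strip_boundary hg'.continuousOn
  have hL2 : Integrable fun x : ℝ => (‖g (x + (η : ℝ) * I)‖ + ‖g (x - (η : ℝ) * I)‖) ^ 2 :=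
    (((memLp_two_iff_integrable_sq_norm hup.aestronglyMeasurable).2 hplus).norm.add
      ((memLp_two_iff_integrable_sq_norm hlow.aestronglyMeasurable).2 hminus).norm).integrable_sq
  obtain ⟨B, hB⟩ := exists_sum_cauchyPDFReal_le (Real.log_pos one_lt_two) η hη0
  refine Summable.of_nonneg_of_le (fun n => sq_nonneg _) (fun n => ?_)
    (summable_integral_mul_of_sum_le (p := fun (n : ℤ) => cauchyPDFReal (n * Real.log 2) η) hL2
      (fun x => sq_nonneg _) (fun n x => (cauchyPDF_pos _ hη0 x).le)
      (fun n => (measurable_cauchyPDFReal _ _).aestronglyMeasurable) hB)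
  simpa only [ofReal_mul] using Complex.sq_norm_le_integral_sq_mul_cauchyPDFReal hη0 hg'
    (fun z hz => hM z (hstrip z hz)) (n * Real.log 2)
end

section
/- Let $E$ be a Banach space and $A$ the generator of a strongly continuous semigroup on $E$. Define $E_{-1} := (E \times E)/\mathscr{G}(A)$, where $\mathscr{G}(A) = \{(x, Ax) : x \in \mathsf{D}(A)\}$ is the graph of $A$, and let $i_{-1} : E \to E_{-1}$ be given by $i_{-1}x := (0,x) + \mathscr{G}(A)$. Then $i_{-1}$ is injective with dense range. -/
namespace LinearPMap

variable {R E F : Type*} [Ring R]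

theorem graph_mk [AddCommGroup E] [AddCommGroup F] [Module R E] [Module R F]
    (D : Submodule R E) (A : D →ₗ[R] F) :
    (⟨D, A⟩ : E →ₗ.[R] F).graph = LinearMap.range (D.subtype.prod A) := by
  ext x
  simp [Prod.ext_iff]

theorem injective_mk_zero_graph [AddCommGroup E] [AddCommGroup F] [Module R E] [Module R F]
    (f : E →ₗ.[R] F) :
    Function.Injective fun y : F ↦ (Submodule.Quotient.mk (0, y) : (E × F) ⧸ f.graph) := by
  intro y y' h
  rw [Submodule.Quotient.eq, Prod.mk_sub_mk] at h
  exact sub_eq_zero.mp (f.graph_fst_eq_zero_snd h (sub_zero 0))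

theorem denseRange_mk_zero_graph [SeminormedAddCommGroup E] [SeminormedAddCommGroup F]
    [Module R E] [Module R F] (f : E →ₗ.[R] F) (hf : Dense (f.domain : Set E)) :
    DenseRange fun y : F ↦ (Submodule.Quotient.mk (0, y) : (E × F) ⧸ f.graph) := by
  rw [Metric.denseRange_iff]
  rintro q ε hε
  obtain ⟨⟨x, y⟩, rfl⟩ := q.exists_rep
  obtain ⟨d, hdD, hxd⟩ := Metric.mem_closure_iff.mp (hf x) ε hε
  let d' : f.domain := ⟨d, hdD⟩
  refine ⟨y - f d', ?_⟩
  -- `(x, y) - (0, y - f d) = (x - d, 0) + (d, f d)`, and `(d, f d)` lies in the graph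
  have hdiff : (Submodule.Quotient.mk (x, y) - Submodule.Quotient.mk (0, y - f d') :
      (E × F) ⧸ f.graph) = Submodule.Quotient.mk (x - d, 0) := by
    rw [← Submodule.Quotient.mk_sub, Submodule.Quotient.eq]
    convert f.mem_graph d' using 1
    simp [d']
  calc dist (Submodule.Quotient.mk (x, y) : (E × F) ⧸ f.graph)
        (Submodule.Quotient.mk (0, y - f d'))
      = ‖(Submodule.Quotient.mk (x - d, 0) : (E × F) ⧸ f.graph)‖ := by rw [dist_eq_norm, hdiff]
    _ ≤ ‖((x - d, 0) : E × F)‖ := Submodule.Quotient.norm_mk_le _ _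
    _ < ε := by simpa [Prod.norm_def, dist_eq_norm] using hxd

end LinearPMap

theorem stmt_8_general {E : Type*} [NormedAddCommGroup E] [NormedSpace ℝ E]
    (D : Submodule ℝ E) (hD : Dense (D : Set E)) (A : D →ₗ[ℝ] E)
    (G : Submodule ℝ (E × E)) (hG : G = LinearMap.range (D.subtype.prod A))
    (iminus : E → (E × E) ⧸ G) (hi : ∀ x, iminus x = Submodule.Quotient.mk (0, x)) :
    Function.Injective iminus ∧ DenseRange iminus := by
  obtain rfl : G = (⟨D, A⟩ : E →ₗ.[ℝ] E).graph := hG.trans (LinearPMap.graph_mk D A).symm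
  obtain rfl : iminus = fun x ↦ Submodule.Quotient.mk (0, x) := funext hi
  exact ⟨LinearPMap.injective_mk_zero_graph _, LinearPMap.denseRange_mk_zero_graph _ hD⟩

/-- The canonical map `i₋₁ : E → E₋₁ = (E × E)/𝒢(A)`, `i₋₁ x = (0,x) + 𝒢(A)`, is
injective with dense range, when `A` is a closed densely defined operator. -/
theorem stmt_8 {E : Type*} [NormedAddCommGroup E] [NormedSpace ℝ E] [CompleteSpace E]
    (D : Submodule ℝ E) (hD : Dense (D : Set E)) (A : D →ₗ[ℝ] E)
    (G : Submodule ℝ (E × E)) (hG : G = LinearMap.range (D.subtype.prod A))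
    (hclosed : IsClosed (G : Set (E × E)))
    (iminus : E → (E × E) ⧸ G) (hi : ∀ x, iminus x = Submodule.Quotient.mk (0, x)) :
    Function.Injective iminus ∧ DenseRange iminus :=
  stmt_8_general D hD A G hG iminus hi
end
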